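/- Let C be a linear code over Z_{p^s} in which every codeword has additive order dividing p^{s-1} (i.e., C ⊆ p·Z_{p^s}^n). Then the Gray image φ_L(C) is self-orthogonal in F_p^{n·p^{s-1}}: for all v, w ∈ C, ⟨φ_L(v), φ_L(w)⟩ = 0 in F_p. -/

import Mathlib

/-- The extended Lee weight on `ZMod (p^s)`. -/
def leeWt (p s : ℕ) (x : ZMod (p ^ s)) : ℕ :=
  if x.val ≤ p ^ s - p ^ (s - 1) then min x.val (p ^ (s - 1)) else p ^ s - x.val

/-- The Gray map `φ_L : ZMod (p^s) → (F_p)^(p^(s-1))`: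
`x = q·p^(s-1) + r` maps to the vector with `q+1` in the first `r` coordinates
and `q` in the rest. -/
def gray (p s : ℕ) (x : ZMod (p ^ s)) : Fin (p ^ (s - 1)) → ZMod p :=
  fun i =>
    if i.val < x.val % p ^ (s - 1) then ((x.val / p ^ (s - 1) + 1 : ℕ) : ZMod p)
    else ((x.val / p ^ (s - 1) : ℕ) : ZMod p)

/-- The Gray map extended coordinatewise to vectors. -/
def grayV (p s n : ℕ) (v : Fin n → ZMod (p ^ s)) : Fin n → Fin (p ^ (s - 1)) → ZMod p :=
  fun i => gray p s (v i)

/-! Write `x = q·m + r` with `m = p^(s-1)` and `0 ≤ r < m`. Then `φ_L(x) = q·𝟙 + 𝟙_{[0,r)}`,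
so `⟨φ_L(x), φ_L(y)⟩ = m q q' + q min(m, r') + q' min(m, r) + min(m, r, r')`. If `p` divides
`x` and `y`, it also divides `m`, `r` and `r'`, so every term vanishes in `𝔽_p`. -/

theorem Fin.sum_ite_val_lt {R : Type*} [AddCommMonoidWithOne R] (m r : ℕ) :
    ∑ j : Fin m, (if j.val < r then (1 : R) else 0) = (min m r : ℕ) := by
  rw [Finset.sum_boole, Fin.card_filter_val_lt]

theorem Fin.sum_add_ite_lt_mul_add_ite_lt {R : Type*} [CommSemiring R] (m r t : ℕ) (a b : R) :
    ∑ j : Fin m, (a + if j.val < r then 1 else 0) * (b + if j.val < t then 1 else 0) =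
      m * a * b + (min m t : ℕ) * a + (min m r : ℕ) * b + (min m (min r t) : ℕ) := by
  have hprod (j : Fin m) : ((if j.val < r then 1 else 0) * if j.val < t then 1 else 0 : R) =
      if j.val < min r t then 1 else 0 := by
    simp only [ite_zero_mul_ite_zero, one_mul, lt_min_iff]
  simp only [add_mul, mul_add, hprod, Finset.sum_add_distrib, ← Finset.mul_sum,
    ← Finset.sum_mul, Fin.sum_ite_val_lt, Finset.sum_const, Finset.card_univ, Fintype.card_fin,
    nsmul_eq_mul]
  ring

theorem gray_apply (p s : ℕ) (x : ZMod (p ^ s)) (j : Fin (p ^ (s - 1))) :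
    gray p s x j = ((x.val / p ^ (s - 1) : ℕ) : ZMod p) +
      if j.val < x.val % p ^ (s - 1) then 1 else 0 := by
  unfold gray
  split_ifs <;> push_cast <;> ring

theorem sum_gray_mul_gray_eq_zero {p s : ℕ} (hs : 2 ≤ s) {x y : ZMod (p ^ s)}
    (hx : p ∣ x.val) (hy : p ∣ y.val) :
    ∑ j, gray p s x j * gray p s y j = 0 := by
  have hm : p ∣ p ^ (s - 1) := dvd_pow_self p (by omega)
  have hrx : p ∣ x.val % p ^ (s - 1) := (Nat.dvd_mod_iff hm).mpr hx
  have hry : p ∣ y.val % p ^ (s - 1) := (Nat.dvd_mod_iff hm).mpr hy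
  have cast_eq_zero {k : ℕ} (hk : p ∣ k) : (k : ZMod p) = 0 :=
    (ZMod.natCast_eq_zero_iff k p).mpr hk
  simp only [gray_apply, Fin.sum_add_ite_lt_mul_add_ite_lt, cast_eq_zero hm,
    cast_eq_zero (min_rec' _ hm hrx), cast_eq_zero (min_rec' _ hm hry),
    cast_eq_zero (min_rec' _ hm (min_rec' _ hrx hry))]
  ring

theorem ZMod.dvd_val_of_pow_pred_nsmul_eq_zero {p s : ℕ} (hp : 0 < p) (hs : s ≠ 0)
    {x : ZMod (p ^ s)} (hx : p ^ (s - 1) • x = 0) : p ∣ x.val := by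
  have : NeZero (p ^ s) := ⟨(pow_pos hp s).ne'⟩
  have hdvd : p ^ (s - 1) * p ∣ p ^ (s - 1) * x.val := by
    rw [← pow_succ, Nat.sub_add_cancel (Nat.one_le_iff_ne_zero.mpr hs),
      ← ZMod.natCast_eq_zero_iff, Nat.cast_mul, ZMod.natCast_zmod_val, ← nsmul_eq_mul,
      hx]
  exact Nat.dvd_of_mul_dvd_mul_left (pow_pos hp _) hdvd

/-- If every codeword of a linear code `C` over `ZMod (p^s)` has additive order
dividing `p^(s-1)`, then the Gray image `φ_L(C)` is self-orthogonal:
`⟨φ_L(v), φ_L(w)⟩ = 0` for all `v, w ∈ C`. -/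
theorem grayV_selfOrthogonal (p s n : ℕ) (hp : p.Prime) (hs : 2 ≤ s)
    (C : Submodule (ZMod (p ^ s)) (Fin n → ZMod (p ^ s)))
    (hC : ∀ v ∈ C, (p ^ (s - 1) : ℕ) • v = 0) :
    ∀ v ∈ C, ∀ w ∈ C,
      ∑ i, ∑ j, grayV p s n v i j * grayV p s n w i j = 0 := by
  have hdvd {v} (hv : v ∈ C) (i : Fin n) : p ∣ (v i).val :=
    ZMod.dvd_val_of_pow_pred_nsmul_eq_zero hp.pos (by omega) (congrFun (hC v hv) i)
  intro v hv w hw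
  exact Finset.sum_eq_zero fun i _ => sum_gray_mul_gray_eq_zero hs (hdvd hv i) (hdvd hw i)
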